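/- arXiv:math/0610617 — 5 statements merged into one kernel-verified Lean document; each statement's English description precedes it below -/
import Mathlib

section
/- Let w = (w_0, …, w_n) be positive integers with gcd 1. Then w_i divides w_0 + … + w_n for every i if and only if for every i and every integer k with 0 ≤ k < w_i, the sum over j of the fractional parts {w_j·k / w_i} is an integer. -/
/-!
The age ∑_j {w_j k / w_i} differs from ∑_j w_j k / w_i = k S / w_i, where S = ∑_j w_j, by an
integer, so it is integral exactly when w_i ∣ k S. This holds for all k < w_i iff it holds for
k = 1 (or w_i = 1), i.e. iff w_i ∣ S.
-/

open Finset

theorem exists_sum_fract_eq_intCast_iff {ι R : Type*} [Ring R] [LinearOrder R] [FloorRing R]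
    (s : Finset ι) (f : ι → R) :
    (∃ m : ℤ, ∑ j ∈ s, Int.fract (f j) = m) ↔ ∃ m : ℤ, ∑ j ∈ s, f j = m := by
  have hfloor : ∑ j ∈ s, f j = ∑ j ∈ s, Int.fract (f j) + ((∑ j ∈ s, ⌊f j⌋ : ℤ) : R) := by
    push_cast
    rw [← sum_add_distrib]
    simp only [Int.fract_add_floor]
  rw [hfloor]
  constructor
  · rintro ⟨m, hm⟩
    exact ⟨m + ∑ j ∈ s, ⌊f j⌋, by rw [Int.cast_add, hm]⟩
  · rintro ⟨m, hm⟩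
    exact ⟨m - ∑ j ∈ s, ⌊f j⌋, by rw [Int.cast_sub, ← hm, add_sub_cancel_right]⟩

theorem exists_natCast_div_eq_intCast_iff_dvd {K : Type*} [Field K] [CharZero K] {a b : ℕ}
    (hb : b ≠ 0) : (∃ m : ℤ, (a : K) / b = m) ↔ b ∣ a := by
  constructor
  · rintro ⟨m, hm⟩
    rw [div_eq_iff (Nat.cast_ne_zero.mpr hb)] at hm
    have hm' : (a : ℤ) = b * m := by rw [mul_comm]; exact_mod_cast hm
    exact Int.natCast_dvd_natCast.mp ⟨m, hm'⟩
  · rintro ⟨c, rfl⟩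
    exact ⟨c, by push_cast; field_simp⟩

theorem Nat.dvd_iff_forall_lt_dvd_mul {b a : ℕ} (hb : 0 < b) :
    b ∣ a ↔ ∀ k < b, b ∣ k * a := by
  refine ⟨fun h k _ => h.mul_left k, fun h => ?_⟩
  rcases (Nat.one_le_iff_ne_zero.mpr hb.ne').eq_or_lt with rfl | hb1
  · exact one_dvd a
  · simpa using h 1 hb1

theorem gorenstein_iff_ages_integer_general (n : ℕ) (w : Fin (n + 1) → ℕ)
    (hpos : ∀ i, 0 < w i) :
    (∀ i, w i ∣ ∑ j, w j) ↔
      (∀ i : Fin (n + 1), ∀ k : ℕ, k < w i →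
        ∃ m : ℤ, (∑ j, Int.fract (((w j : ℚ) * k) / (w i : ℚ))) = (m : ℚ)) := by
  have hage : ∀ i (k : ℕ), (∃ m : ℤ, ∑ j, Int.fract ((w j : ℚ) * k / w i) = m) ↔
      w i ∣ k * ∑ j, w j := fun i k => by
    have hsum : ∑ j, (w j : ℚ) * k / w i = ((k * ∑ j, w j : ℕ) : ℚ) / w i := by
      push_cast
      rw [← sum_div, ← sum_mul, mul_comm]
    rw [exists_sum_fract_eq_intCast_iff, hsum,
      exists_natCast_div_eq_intCast_iff_dvd (hpos i).ne']
  simp only [hage]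
  exact forall_congr' fun i => Nat.dvd_iff_forall_lt_dvd_mul (hpos i)

theorem gorenstein_iff_ages_integer (n : ℕ) (w : Fin (n + 1) → ℕ)
    (hpos : ∀ i, 0 < w i) (hgcd : Finset.univ.gcd w = 1) :
    (∀ i, w i ∣ ∑ j, w j) ↔
      (∀ i : Fin (n + 1), ∀ k : ℕ, k < w i →
        ∃ m : ℤ, (∑ j, Int.fract (((w j : ℚ) * k) / (w i : ℚ))) = (m : ℚ)) :=
  gorenstein_iff_ages_integer_general n w hpos
end

section
/- For every n ≥ 1, there are only finitely many tuples (x_0, …, x_n) of integers with 1 ≤ x_0 ≤ x_1 ≤ … ≤ x_n satisfying 1 = 1/x_0 + 1/x_1 + ⋯ + 1/x_n. -/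
/-!
Induct on the length, for an arbitrary rational target `r`. In a monotone tuple the smallest
entry `x₀` contributes the largest of the `m + 1` unit fractions, so `r ≤ (m + 1) / x₀`, which
bounds `x₀` by `(m + 1) / r`. Each of the finitely many choices of `x₀` leaves a shorter tuple
with target `r - 1 / x₀`.
-/

open Finset

def egyptianTuples (m : ℕ) (r : ℚ) : Set (Fin m → ℕ) :=
  {x | (∀ i, 1 ≤ x i) ∧ Monotone x ∧ ∑ i, (1 : ℚ) / (x i : ℚ) = r}

namespace egyptianTuples

variable {m : ℕ} {r : ℚ} {x : Fin (m + 1) → ℕ}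

theorem head_le (hx : x ∈ egyptianTuples (m + 1) r) : (x 0 : ℚ) ≤ (m + 1) / r := by
  obtain ⟨hpos, hmono, hsum⟩ := hx
  have hx₀ : (0 : ℚ) < x 0 := by exact_mod_cast hpos 0
  have hr : 0 < r := by
    calc (0 : ℚ) < 1 / (x 0 : ℚ) := by positivity
      _ ≤ r := hsum ▸ single_le_sum (f := fun i => (1 : ℚ) / (x i : ℚ))
          (fun i _ => by positivity) (mem_univ 0)
  have hr_le : r ≤ (m + 1) / x 0 := by
    calc r = ∑ i, (1 : ℚ) / (x i : ℚ) := hsum.symm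
      _ ≤ ∑ _i : Fin (m + 1), (1 : ℚ) / (x 0 : ℚ) := by
        gcongr with i
        exact_mod_cast hmono (Fin.zero_le i)
      _ = (m + 1) / x 0 := by simp [div_eq_mul_inv]
  rw [le_div_iff₀ hr]
  rwa [le_div_iff₀ hx₀, mul_comm] at hr_le

theorem tail_mem (hx : x ∈ egyptianTuples (m + 1) r) :
    Fin.tail x ∈ egyptianTuples m (r - 1 / x 0) := by
  obtain ⟨hpos, hmono, hsum⟩ := hx
  refine ⟨fun i => hpos i.succ, fun i j hij => hmono (Fin.succ_le_succ_iff.mpr hij), ?_⟩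
  rw [Fin.sum_univ_succ] at hsum
  simp only [Fin.tail]
  linarith

theorem succ_subset (m : ℕ) (r : ℚ) :
    egyptianTuples (m + 1) r ⊆
      ⋃ a ∈ range (⌈(m + 1 : ℚ) / r⌉₊ + 1),
        Fin.cons a '' egyptianTuples m (r - 1 / a) := by
  intro x hx
  have hx₀ : x 0 ≤ ⌈(m + 1 : ℚ) / r⌉₊ := by
    exact_mod_cast (head_le hx).trans (Nat.le_ceil _)
  exact Set.mem_biUnion (mem_range.mpr (Nat.lt_succ_of_le hx₀))
    ⟨Fin.tail x, tail_mem hx, Fin.cons_self_tail x⟩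

theorem finite (m : ℕ) (r : ℚ) : (egyptianTuples m r).Finite := by
  induction m generalizing r with
  | zero => exact Set.toFinite _
  | succ m ih =>
    refine (Set.Finite.biUnion (finite_toSet _) fun a _ => ?_).subset (succ_subset m r)
    exact (ih _).image _

end egyptianTuples

theorem egyptian_fractions_finite_general (n : ℕ) :
    {x : Fin (n + 1) → ℕ | (∀ i, 1 ≤ x i) ∧ (∀ i j, i ≤ j → x i ≤ x j) ∧
      (∑ i, (1 : ℚ) / (x i : ℚ)) = 1}.Finite :=
  egyptianTuples.finite (n + 1) 1

theorem egyptian_fractions_finite (n : ℕ) (hn : 1 ≤ n) :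
    {x : Fin (n + 1) → ℕ | (∀ i, 1 ≤ x i) ∧ (∀ i j, i ≤ j → x i ≤ x j) ∧
      (∑ i, (1 : ℚ) / (x i : ℚ)) = 1}.Finite :=
  egyptian_fractions_finite_general n
end

section
/- The complete list of quadruples (w_0,w_1,w_2,w_3) of positive integers with w_0 ≤ w_1 ≤ w_2 ≤ w_3, gcd equal to 1, and each w_i dividing w_0+w_1+w_2+w_3 is: (1,1,1,1), (1,1,1,3), (1,1,2,2), (1,3,4,4), (1,2,2,5), (1,1,4,6), (1,2,3,6), (1,1,2,4), (2,3,3,4), (1,2,6,9), (1,4,5,10), (1,3,8,12), (2,3,10,15), (1,6,14,21). -/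
/-!
Put `s = w₀ + w₁ + w₂ + w₃` and `cᵢ = s / wᵢ`. The divisibility conditions say that
`1 = 1/c₀ + 1/c₁ + 1/c₂ + 1/c₃` with `c₃ ≤ c₂ ≤ c₁ ≤ c₀`, and there are only fourteen such
decompositions of `1` into unit fractions: the smallest denominator is at most `4`, after which
each further denominator is bounded in terms of the previous ones and the last one is forced.
Conversely the quotients determine the weights: `s` is a common multiple of the `cᵢ`, and
`gcd wᵢ = 1` forces `s = lcm cᵢ`, so `wᵢ = lcm c / cᵢ`.
-/

theorem sum_inv_cast_div_sum_eq_one {ι : Type*} (s : Finset ι) (w : ι → ℕ)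
    (hpos : 0 < ∑ i ∈ s, w i) (hdvd : ∀ i ∈ s, w i ∣ ∑ j ∈ s, w j) :
    ∑ i ∈ s, (((∑ j ∈ s, w j) / w i : ℕ) : ℚ)⁻¹ = 1 := by
  have hS : ((∑ j ∈ s, w j : ℕ) : ℚ) ≠ 0 := by positivity
  calc ∑ i ∈ s, (((∑ j ∈ s, w j) / w i : ℕ) : ℚ)⁻¹
      = ∑ i ∈ s, (w i : ℚ) / (∑ j ∈ s, w j : ℕ) := by
        refine Finset.sum_congr rfl fun i hi => ?_
        have hwi : (w i : ℚ) ≠ 0 :=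
          Nat.cast_ne_zero.2 (Nat.pos_of_dvd_of_pos (hdvd i hi) hpos).ne'
        rw [Nat.cast_div (hdvd i hi) hwi, inv_div]
    _ = 1 := by rw [← Finset.sum_div, ← Nat.cast_sum, div_self hS]

theorem lcm_div_eq_of_gcd_eq_one {ι : Type*} {s : Finset ι} {w : ι → ℕ} {S : ℕ} (hS : 0 < S)
    (hdvd : ∀ i ∈ s, w i ∣ S) (hgcd : s.gcd w = 1) : s.lcm (fun i => S / w i) = S := by
  obtain ⟨t, ht⟩ := Finset.lcm_dvd fun i hi => Nat.div_dvd_of_dvd (hdvd i hi)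
  suffices t ∣ 1 by rw [Nat.dvd_one.1 this, mul_one] at ht; exact ht.symm
  rw [← hgcd]
  refine Finset.dvd_gcd fun i hi => ?_
  have hq : 0 < S / w i :=
    Nat.div_pos (Nat.le_of_dvd hS (hdvd i hi)) (Nat.pos_of_dvd_of_pos (hdvd i hi) hS)
  obtain ⟨m, hm⟩ := Finset.dvd_lcm (f := fun i => S / w i) hi
  refine ⟨m, Nat.eq_of_mul_eq_mul_left hq ?_⟩
  calc S / w i * w i = S := Nat.div_mul_cancel (hdvd i hi)
    _ = S / w i * m * t := ht.trans (by rw [hm])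
    _ = S / w i * (t * m) := by ring

theorem one_lt_mul_and_mul_le_of_eq_inv_add {x q r k : ℚ} (hx : 0 < x)
    (h : q = x⁻¹ + r) (hr : 0 < r) (hrk : r ≤ k * x⁻¹) :
    1 < q * x ∧ q * x ≤ k + 1 := by
  have hqx : q * x = 1 + r * x := by rw [h]; field_simp
  have hrx : r * x ≤ k :=
    calc r * x ≤ k * x⁻¹ * x := by gcongr
      _ = k := by field_simp
  constructor <;> nlinarith [mul_pos hr hx]

section Egyptian

variable {a b c d : ℕ}

theorem egyptian_bounds (ha : 0 < a) (hab : a ≤ b) (hbc : b ≤ c) (hcd : c ≤ d)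
    (h : (a : ℚ)⁻¹ + (b : ℚ)⁻¹ + (c : ℚ)⁻¹ + (d : ℚ)⁻¹ = 1) :
    (1 < a ∧ a ≤ 4) ∧ (a + b < a * b ∧ a * b ≤ 3 * a + b) ∧
      (a * b + a * c + b * c < a * b * c ∧ a * b * c ≤ 2 * a * b + a * c + b * c) ∧
      a * b * c * d = b * c * d + a * c * d + a * b * d + a * b * c := by
  have ha' : (0 : ℚ) < a := by exact_mod_cast ha
  have hb' : (0 : ℚ) < b := ha'.trans_le (by exact_mod_cast hab)
  have hc' : (0 : ℚ) < c := hb'.trans_le (by exact_mod_cast hbc)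
  have hd' : (0 : ℚ) < d := hc'.trans_le (by exact_mod_cast hcd)
  have hab' : (b : ℚ)⁻¹ ≤ (a : ℚ)⁻¹ := inv_anti₀ ha' (by exact_mod_cast hab)
  have hbc' : (c : ℚ)⁻¹ ≤ (b : ℚ)⁻¹ := inv_anti₀ hb' (by exact_mod_cast hbc)
  have hcd' : (d : ℚ)⁻¹ ≤ (c : ℚ)⁻¹ := inv_anti₀ hc' (by exact_mod_cast hcd)
  have hd'' : (0 : ℚ) < (d : ℚ)⁻¹ := inv_pos.2 hd'
  refine ⟨?_, ?_, ?_, ?_⟩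
  · have := one_lt_mul_and_mul_le_of_eq_inv_add (q := 1)
      (r := (b : ℚ)⁻¹ + (c : ℚ)⁻¹ + (d : ℚ)⁻¹) (k := 3) ha' (by linarith) (by linarith)
      (by linarith)
    constructor
    · exact_mod_cast (by linarith : (1 : ℚ) < a)
    · exact_mod_cast (by linarith : (a : ℚ) ≤ 4)
  · have := one_lt_mul_and_mul_le_of_eq_inv_add (q := 1 - (a : ℚ)⁻¹)
      (r := (c : ℚ)⁻¹ + (d : ℚ)⁻¹) (k := 2) hb' (by linarith) (by linarith) (by linarith)
    have e : (1 - (a : ℚ)⁻¹) * b * a = a * b - b := by field_simp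
    constructor
    · exact_mod_cast (by nlinarith : (a : ℚ) + b < a * b)
    · exact_mod_cast (by nlinarith : (a : ℚ) * b ≤ 3 * a + b)
  · have := one_lt_mul_and_mul_le_of_eq_inv_add (q := 1 - (a : ℚ)⁻¹ - (b : ℚ)⁻¹)
      (r := (d : ℚ)⁻¹) (k := 1) hc' (by linarith) (by linarith) (by linarith)
    have e : (1 - (a : ℚ)⁻¹ - (b : ℚ)⁻¹) * c * (a * b) = a * b * c - a * c - b * c := by
      field_simp; ring
    have hab0 : (0 : ℚ) < a * b := by positivity
    constructor
    · exact_mod_cast (by nlinarith : (a : ℚ) * b + a * c + b * c < a * b * c)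
    · exact_mod_cast (by nlinarith : (a : ℚ) * b * c ≤ 2 * a * b + a * c + b * c)
  · field_simp at h
    exact_mod_cast
      (by linarith : (a : ℚ) * b * c * d = b * c * d + a * c * d + a * b * d + a * b * c)

def egyptianQuadruples : List (ℕ × ℕ × ℕ × ℕ) :=
  [(2, 3, 7, 42), (2, 3, 8, 24), (2, 3, 9, 18), (2, 3, 10, 15), (2, 3, 12, 12), (2, 4, 5, 20),
   (2, 4, 6, 12), (2, 4, 8, 8), (2, 5, 5, 10), (2, 6, 6, 6), (3, 3, 4, 12), (3, 3, 6, 6),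
   (3, 4, 4, 6), (4, 4, 4, 4)]

theorem mem_egyptianQuadruples (ha : 0 < a) (hab : a ≤ b) (hbc : b ≤ c) (hcd : c ≤ d)
    (h : (a : ℚ)⁻¹ + (b : ℚ)⁻¹ + (c : ℚ)⁻¹ + (d : ℚ)⁻¹ = 1) :
    (a, b, c, d) ∈ egyptianQuadruples := by
  obtain ⟨⟨ha1, ha4⟩, ⟨hb1, hb3⟩, ⟨hc1, hc2⟩, hd⟩ := egyptian_bounds ha hab hbc hcd h
  have hb6 : b ≤ 6 := by nlinarith
  -- once `a` and `b` are fixed the bounds on `c` and the equation for `d` are linear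
  interval_cases a <;> interval_cases b <;> (have hc12 : c ≤ 12 := by omega) <;>
    interval_cases c <;> simp [egyptianQuadruples] <;> omega

end Egyptian

/-- The primitive weight vector, listed in increasing order, whose quotients `s / wᵢ` are
`(d, c, b, a)`. -/
def quotientWeights : ℕ × ℕ × ℕ × ℕ → ℕ × ℕ × ℕ × ℕ
  | (a, b, c, d) =>
    let L := d.lcm (c.lcm (b.lcm a))
    (L / d, L / c, L / b, L / a)

def gorensteinWeights : List (ℕ × ℕ × ℕ × ℕ) :=
  [(1, 1, 1, 1), (1, 1, 1, 3), (1, 1, 2, 2), (1, 3, 4, 4), (1, 2, 2, 5), (1, 1, 4, 6),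
   (1, 2, 3, 6), (1, 1, 2, 4), (2, 3, 3, 4), (1, 2, 6, 9), (1, 4, 5, 10), (1, 3, 8, 12),
   (2, 3, 10, 15), (1, 6, 14, 21)]

theorem quotientWeights_mem_gorensteinWeights :
    ∀ q ∈ egyptianQuadruples, quotientWeights q ∈ gorensteinWeights := by
  decide

theorem gorenstein_wps_dim_three_classification (w0 w1 w2 w3 : ℕ) :
    (0 < w0 ∧ w0 ≤ w1 ∧ w1 ≤ w2 ∧ w2 ≤ w3 ∧
      Nat.gcd w0 (Nat.gcd w1 (Nat.gcd w2 w3)) = 1 ∧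
      w0 ∣ w0 + w1 + w2 + w3 ∧ w1 ∣ w0 + w1 + w2 + w3 ∧
      w2 ∣ w0 + w1 + w2 + w3 ∧ w3 ∣ w0 + w1 + w2 + w3) ↔
    ((w0, w1, w2, w3) = (1, 1, 1, 1) ∨ (w0, w1, w2, w3) = (1, 1, 1, 3) ∨
     (w0, w1, w2, w3) = (1, 1, 2, 2) ∨ (w0, w1, w2, w3) = (1, 3, 4, 4) ∨
     (w0, w1, w2, w3) = (1, 2, 2, 5) ∨ (w0, w1, w2, w3) = (1, 1, 4, 6) ∨
     (w0, w1, w2, w3) = (1, 2, 3, 6) ∨ (w0, w1, w2, w3) = (1, 1, 2, 4) ∨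
     (w0, w1, w2, w3) = (2, 3, 3, 4) ∨ (w0, w1, w2, w3) = (1, 2, 6, 9) ∨
     (w0, w1, w2, w3) = (1, 4, 5, 10) ∨ (w0, w1, w2, w3) = (1, 3, 8, 12) ∨
     (w0, w1, w2, w3) = (2, 3, 10, 15) ∨ (w0, w1, w2, w3) = (1, 6, 14, 21)) := by
  constructor
  · rintro ⟨hw0, h01, h12, h23, hgcd, hd0, hd1, hd2, hd3⟩
    set S := w0 + w1 + w2 + w3
    have hS : 0 < S := by omega
    have hsum : ∑ i, ![w0, w1, w2, w3] i = S := Fin.sum_univ_four _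
    have hdvd : ∀ i ∈ Finset.univ, ![w0, w1, w2, w3] i ∣ S := by simp [Fin.forall_fin_succ, *]
    have hinv : ((S / w3 : ℕ) : ℚ)⁻¹ + ((S / w2 : ℕ) : ℚ)⁻¹ + ((S / w1 : ℕ) : ℚ)⁻¹ +
        ((S / w0 : ℕ) : ℚ)⁻¹ = 1 := by
      have := sum_inv_cast_div_sum_eq_one Finset.univ _ (hsum ▸ hS) (hsum ▸ hdvd)
      rw [hsum, Fin.sum_univ_four] at this
      simp only [Fin.isValue, Matrix.cons_val] at this
      linarith
    have hL : (S / w0).lcm ((S / w1).lcm ((S / w2).lcm (S / w3))) = S := by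
      have := lcm_div_eq_of_gcd_eq_one hS hdvd (by simp [Fin.univ_succ]; exact hgcd)
      simp [Fin.univ_succ] at this
      exact this
    have hq := mem_egyptianQuadruples (Nat.div_pos (Nat.le_of_dvd hS hd3) (by omega))
      (Nat.div_le_div_left h23 (by omega)) (Nat.div_le_div_left h12 (by omega))
      (Nat.div_le_div_left h01 hw0) hinv
    have hw : (w0, w1, w2, w3) = quotientWeights (S / w3, S / w2, S / w1, S / w0) := by
      simp only [quotientWeights, hL, Nat.div_div_self hd0 hS.ne', Nat.div_div_self hd1 hS.ne',
        Nat.div_div_self hd2 hS.ne', Nat.div_div_self hd3 hS.ne']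
    simpa [hw, gorensteinWeights] using quotientWeights_mem_gorensteinWeights _ hq
  · rintro (h | h | h | h | h | h | h | h | h | h | h | h | h | h) <;> cases h <;> decide
end

section
/- Let R = ℂ[h,e]/⟨h² + (1/4)e² − he, h²e⟩ and S = ℂ[H,E]/⟨H² − E², H²E⟩. The ℂ-algebra map sending H ↦ h and E ↦ (i/2)·e induces a well-defined ring isomorphism S ≅ R, where i is the imaginary unit. -/
open MvPolynomial

/-- The ideal presenting the Chen-Ruan cohomology ring `S = ℂ[H,E]/⟨H²−E², H²E⟩`
of `P(1,1,2,2)`.  Variables: `X 0 = H`, `X 1 = E`. -/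
noncomputable def idealS : Ideal (MvPolynomial (Fin 2) ℂ) :=
  Ideal.span {X 0 ^ 2 - X 1 ^ 2, X 0 ^ 2 * X 1}

/-- The ideal presenting the quantum corrected cohomology ring
`R = ℂ[h,e]/⟨h²e, h² + (1/4)e²⟩` of the crepant resolution of `|P(1,1,2,2)|`
at `q₁ = −1`.  Variables: `X 0 = h`, `X 1 = e`. -/
noncomputable def idealR : Ideal (MvPolynomial (Fin 2) ℂ) :=
  Ideal.span {X 0 ^ 2 * X 1, X 0 ^ 2 + C (1 / 4 : ℂ) * X 1 ^ 2}

/-! The substitution `H ↦ h`, `E ↦ (i/2) e` is a diagonal rescaling of the variables, hence an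
automorphism of `ℂ[X₀, X₁]`. Since `(i/2)² = -1/4`, it sends `H² - E²` to `h² + e²/4` and `H²E` to
the unit multiple `(i/2) h²e`, so it carries the ideal of `S` onto the ideal of `R` and descends
to the quotients. -/

theorem Ideal.span_pair_units_smul {R A : Type*} [CommSemiring R] [CommSemiring A] [Algebra R A]
    (u : Rˣ) (a b : A) : Ideal.span {a, u • b} = Ideal.span {a, b} := by
  rw [Ideal.span_insert, Ideal.span_insert, Ideal.span, Ideal.span,
    Submodule.span_singleton_group_smul_eq]

namespace MvPolynomial

variable {σ R : Type*} [CommSemiring R]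

noncomputable def scaleVars (c : σ → Rˣ) : MvPolynomial σ R ≃ₐ[R] MvPolynomial σ R :=
  AlgEquiv.ofAlgHom (aeval fun i => c i • X i) (aeval fun i => (c i)⁻¹ • X i)
    (by ext i; simp [Units.smul_def, smul_smul]) (by ext i; simp [Units.smul_def, smul_smul])

@[simp]
theorem scaleVars_X (c : σ → Rˣ) (i : σ) : scaleVars c (X i) = c i • X i :=
  aeval_X _ _

end MvPolynomial

theorem crepant_resolution_P1122 :
    ∃ φ : (MvPolynomial (Fin 2) ℂ ⧸ idealS) ≃ₐ[ℂ] (MvPolynomial (Fin 2) ℂ ⧸ idealR),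
      φ (Ideal.Quotient.mk idealS (X 0)) = Ideal.Quotient.mk idealR (X 0) ∧
      φ (Ideal.Quotient.mk idealS (X 1)) =
        (Complex.I / 2) • Ideal.Quotient.mk idealR (X 1) := by
  let u : ℂˣ := Units.mk0 (Complex.I / 2) (by simp)
  let σ := scaleVars ![1, u]
  have hu : (u : ℂ) ^ 2 = -(1 / 4) := by
    simp only [u, Units.val_mk0, div_pow, Complex.I_sq]; norm_num
  have hσ₁ : σ (X 0 ^ 2 - X 1 ^ 2) = X 0 ^ 2 + C (1 / 4 : ℂ) * X 1 ^ 2 := by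
    simp [σ, Units.smul_def, smul_eq_C_mul, mul_pow, ← C_pow, hu]
  have hσ₂ : σ (X 0 ^ 2 * X 1) = u • (X 0 ^ 2 * X 1) := by
    simp [σ, Units.smul_def]
  have hideal : idealR = idealS.map (σ : MvPolynomial (Fin 2) ℂ →+* MvPolynomial (Fin 2) ℂ) := by
    rw [idealS, idealR, Ideal.map_span, Set.image_pair, RingHom.coe_coe, hσ₁, hσ₂, Set.pair_comm,
      Ideal.span_pair_units_smul]
  refine ⟨Ideal.quotientEquivAlg idealS idealR σ hideal, ?_, ?_⟩
  · simp [σ]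
  · simp only [Ideal.quotientEquivAlg_mk, σ, MvPolynomial.scaleVars_X]
    exact map_smul (Ideal.Quotient.mkₐ ℂ idealR) _ _
end

section
/- The ℂ-algebra A := ℂ[H,E₁,E₂,E₃,E₄] modulo the ideal generated by HE₄, E₁² − 3HE₂, E₁E₂ − 3HE₃, E₁E₃ − 3H², E₂² − 3H², E₂E₃ − HE₁, E₃² − HE₂, 16H³ − E₄³, H²E₁, H²E₂, H²E₃, E₁E₄, E₂E₄, E₃E₄ has dimension 12 as a ℂ-vector space, with basis 1, H, E₁, E₂, E₃, E₄, H², HE₁, HE₂, HE₃, E₄², H³. -/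
open MvPolynomial Finsupp

/-- The Chen-Ruan cohomology ring of `P(1,3,4,4)`.
Variables: `X 0 = H`, `X 1 = E₁`, `X 2 = E₂`, `X 3 = E₃`, `X 4 = E₄`. -/
noncomputable def idealA : Ideal (MvPolynomial (Fin 5) ℂ) :=
  Ideal.span {X 0 * X 4, X 1 ^ 2 - 3 * (X 0 * X 2), X 1 * X 2 - 3 * (X 0 * X 3),
    X 1 * X 3 - 3 * X 0 ^ 2, X 2 ^ 2 - 3 * X 0 ^ 2, X 2 * X 3 - X 0 * X 1,
    X 3 ^ 2 - X 0 * X 2, 16 * X 0 ^ 3 - X 4 ^ 3,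
    X 0 ^ 2 * X 1, X 0 ^ 2 * X 2, X 0 ^ 2 * X 3,
    X 1 * X 4, X 2 * X 4, X 3 * X 4}

noncomputable abbrev mkA : MvPolynomial (Fin 5) ℂ →+* MvPolynomial (Fin 5) ℂ ⧸ idealA :=
  Ideal.Quotient.mk idealA

set_option linter.unreachableTactic false
set_option linter.unusedTactic false

abbrev F5 := Fin 5 →₀ ℕ
noncomputable def s (i : Fin 5) (n : ℕ) : F5 := Finsupp.single i n

lemma fs_eq_iff (f g : F5) :
    f = g ↔ f 0 = g 0 ∧ f 1 = g 1 ∧ f 2 = g 2 ∧ f 3 = g 3 ∧ f 4 = g 4 := by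
  constructor
  · rintro rfl; exact ⟨rfl, rfl, rfl, rfl, rfl⟩
  · rintro ⟨h0, h1, h2, h3, h4⟩
    ext i; fin_cases i <;> assumption

lemma s_apply (i j : Fin 5) (n : ℕ) : s i n j = if i = j then n else 0 := Finsupp.single_apply

noncomputable def L : MvPolynomial (Fin 5) ℂ →ₗ[ℂ] ℂ :=
  lcoeff ℂ (s 0 3) + (3:ℂ) • lcoeff ℂ (s 0 1 + s 1 1 + s 3 1) + (3:ℂ) • lcoeff ℂ (s 0 1 + s 2 2)
  + (9:ℂ) • lcoeff ℂ (s 1 2 + s 2 1) + (3:ℂ) • lcoeff ℂ (s 2 1 + s 3 2) + (16:ℂ) • lcoeff ℂ (s 4 3)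

lemma L_eq (p : MvPolynomial (Fin 5) ℂ) :
    L p = coeff (s 0 3) p + 3 * coeff (s 0 1 + s 1 1 + s 3 1) p + 3 * coeff (s 0 1 + s 2 2) p
      + 9 * coeff (s 1 2 + s 2 1) p + 3 * coeff (s 2 1 + s 3 2) p + 16 * coeff (s 4 3) p := by
  simp [L, lcoeff]

lemma hX (i : Fin 5) : (X i : MvPolynomial (Fin 5) ℂ) = monomial (s i 1) 1 := rfl
lemma hXpow (i : Fin 5) (n : ℕ) : (X i : MvPolynomial (Fin 5) ℂ) ^ n = monomial (s i n) 1 :=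
  X_pow_eq_monomial

lemma s_smul (n : ℕ) (i : Fin 5) (k : ℕ) : n • s i k = s i (n * k) := by
  simp [s, Finsupp.smul_single, mul_comm]

lemma C3 : ((3 : MvPolynomial (Fin 5) ℂ)) = C (3:ℂ) := (map_ofNat C 3).symm
lemma C16 : ((16 : MvPolynomial (Fin 5) ℂ)) = C (16:ℂ) := (map_ofNat C 16).symm

lemma monomial_mul_C (d : F5) (r a : ℂ) :
    (monomial d r : MvPolynomial (Fin 5) ℂ) * C a = monomial d (r * a) := by
  rw [mul_comm, C_mul_monomial, mul_comm]

lemma gv1 (a : F5) : L (monomial a 1 * (X 0 * X 4)) = 0 := by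
  simp only [L_eq, hX, hXpow, C3, C16, monomial_pow, s_smul, one_pow, mul_assoc,
    monomial_mul, C_mul_monomial, mul_sub, sub_mul,
    mul_one, one_mul, coeff_sub, coeff_monomial]
  try simp [fs_eq_iff, Finsupp.add_apply, s_apply]
  try split_ifs <;> ring

lemma gv2 (a : F5) : L (monomial a 1 * (X 1 ^ 2 - 3 * (X 0 * X 2))) = 0 := by
  simp only [L_eq, hX, hXpow, C3, C16, monomial_pow, s_smul, one_pow, mul_assoc,
    monomial_mul, C_mul_monomial, mul_sub, sub_mul,
    mul_one, one_mul, coeff_sub, coeff_monomial]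
  try simp [fs_eq_iff, Finsupp.add_apply, s_apply]
  try split_ifs <;> ring

lemma gv3 (a : F5) : L (monomial a 1 * (X 1 * X 2 - 3 * (X 0 * X 3))) = 0 := by
  simp only [L_eq, hX, hXpow, C3, C16, monomial_pow, s_smul, one_pow, mul_assoc,
    monomial_mul, C_mul_monomial, mul_sub, sub_mul,
    mul_one, one_mul, coeff_sub, coeff_monomial]
  try simp [fs_eq_iff, Finsupp.add_apply, s_apply]
  try split_ifs <;> ring

lemma gv4 (a : F5) : L (monomial a 1 * (X 1 * X 3 - 3 * X 0 ^ 2)) = 0 := by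
  simp only [L_eq, hX, hXpow, C3, C16, monomial_pow, s_smul, one_pow, mul_assoc,
    monomial_mul, C_mul_monomial, mul_sub, sub_mul,
    mul_one, one_mul, coeff_sub, coeff_monomial]
  try simp [fs_eq_iff, Finsupp.add_apply, s_apply]
  try split_ifs <;> ring

lemma gv5 (a : F5) : L (monomial a 1 * (X 2 ^ 2 - 3 * X 0 ^ 2)) = 0 := by
  simp only [L_eq, hX, hXpow, C3, C16, monomial_pow, s_smul, one_pow, mul_assoc,
    monomial_mul, C_mul_monomial, mul_sub, sub_mul,
    mul_one, one_mul, coeff_sub, coeff_monomial]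
  try simp [fs_eq_iff, Finsupp.add_apply, s_apply]
  try split_ifs <;> ring

lemma gv6 (a : F5) : L (monomial a 1 * (X 2 * X 3 - X 0 * X 1)) = 0 := by
  simp only [L_eq, hX, hXpow, C3, C16, monomial_pow, s_smul, one_pow, mul_assoc,
    monomial_mul, C_mul_monomial, mul_sub, sub_mul,
    mul_one, one_mul, coeff_sub, coeff_monomial]
  try simp [fs_eq_iff, Finsupp.add_apply, s_apply]
  try split_ifs <;> ring

lemma gv7 (a : F5) : L (monomial a 1 * (X 3 ^ 2 - X 0 * X 2)) = 0 := by
  simp only [L_eq, hX, hXpow, C3, C16, monomial_pow, s_smul, one_pow, mul_assoc,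
    monomial_mul, C_mul_monomial, mul_sub, sub_mul,
    mul_one, one_mul, coeff_sub, coeff_monomial]
  try simp [fs_eq_iff, Finsupp.add_apply, s_apply]
  try split_ifs <;> ring

lemma gv8 (a : F5) : L (monomial a 1 * (16 * X 0 ^ 3 - X 4 ^ 3)) = 0 := by
  simp only [L_eq, hX, hXpow, C3, C16, monomial_pow, s_smul, one_pow, mul_assoc,
    monomial_mul, C_mul_monomial, mul_sub, sub_mul,
    mul_one, one_mul, coeff_sub, coeff_monomial]
  try simp [fs_eq_iff, Finsupp.add_apply, s_apply]
  try split_ifs <;> ring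

lemma gv9 (a : F5) : L (monomial a 1 * (X 0 ^ 2 * X 1)) = 0 := by
  simp only [L_eq, hX, hXpow, C3, C16, monomial_pow, s_smul, one_pow, mul_assoc,
    monomial_mul, C_mul_monomial, mul_sub, sub_mul,
    mul_one, one_mul, coeff_sub, coeff_monomial]
  try simp [fs_eq_iff, Finsupp.add_apply, s_apply]
  try split_ifs <;> ring

lemma gv10 (a : F5) : L (monomial a 1 * (X 0 ^ 2 * X 2)) = 0 := by
  simp only [L_eq, hX, hXpow, C3, C16, monomial_pow, s_smul, one_pow, mul_assoc,
    monomial_mul, C_mul_monomial, mul_sub, sub_mul,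
    mul_one, one_mul, coeff_sub, coeff_monomial]
  try simp [fs_eq_iff, Finsupp.add_apply, s_apply]
  try split_ifs <;> ring

lemma gv11 (a : F5) : L (monomial a 1 * (X 0 ^ 2 * X 3)) = 0 := by
  simp only [L_eq, hX, hXpow, C3, C16, monomial_pow, s_smul, one_pow, mul_assoc,
    monomial_mul, C_mul_monomial, mul_sub, sub_mul,
    mul_one, one_mul, coeff_sub, coeff_monomial]
  try simp [fs_eq_iff, Finsupp.add_apply, s_apply]
  try split_ifs <;> ring

lemma gv12 (a : F5) : L (monomial a 1 * (X 1 * X 4)) = 0 := by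
  simp only [L_eq, hX, hXpow, C3, C16, monomial_pow, s_smul, one_pow, mul_assoc,
    monomial_mul, C_mul_monomial, mul_sub, sub_mul,
    mul_one, one_mul, coeff_sub, coeff_monomial]
  try simp [fs_eq_iff, Finsupp.add_apply, s_apply]
  try split_ifs <;> ring

lemma gv13 (a : F5) : L (monomial a 1 * (X 2 * X 4)) = 0 := by
  simp only [L_eq, hX, hXpow, C3, C16, monomial_pow, s_smul, one_pow, mul_assoc,
    monomial_mul, C_mul_monomial, mul_sub, sub_mul,
    mul_one, one_mul, coeff_sub, coeff_monomial]
  try simp [fs_eq_iff, Finsupp.add_apply, s_apply]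
  try split_ifs <;> ring

lemma gv14 (a : F5) : L (monomial a 1 * (X 3 * X 4)) = 0 := by
  simp only [L_eq, hX, hXpow, C3, C16, monomial_pow, s_smul, one_pow, mul_assoc,
    monomial_mul, C_mul_monomial, mul_sub, sub_mul,
    mul_one, one_mul, coeff_sub, coeff_monomial]
  try simp [fs_eq_iff, Finsupp.add_apply, s_apply]
  try split_ifs <;> ring

lemma L_mul_eq_zero (g : MvPolynomial (Fin 5) ℂ) (hg : ∀ a : F5, L (monomial a 1 * g) = 0)
    (r : MvPolynomial (Fin 5) ℂ) : L (r * g) = 0 := by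
  conv_lhs => rw [r.as_sum]
  rw [Finset.sum_mul, map_sum]
  refine Finset.sum_eq_zero fun a _ => ?_
  have : monomial a (coeff a r) * g = (coeff a r) • (monomial a 1 * g) := by
    rw [← smul_mul_assoc, smul_monomial, smul_eq_mul, mul_one]
  rw [this, map_smul, hg, smul_zero]

lemma L_vanish {q : MvPolynomial (Fin 5) ℂ} (hq : q ∈ idealA) :
    ∀ r, L (r * q) = 0 := by
  refine Submodule.span_induction ?_ ?_ ?_ ?_ hq
  · intro x hx
    simp only [Set.mem_insert_iff, Set.mem_singleton_iff] at hx
    rcases hx with h|h|h|h|h|h|h|h|h|h|h|h|h|h <;> subst h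
    · exact L_mul_eq_zero _ gv1
    · exact L_mul_eq_zero _ gv2
    · exact L_mul_eq_zero _ gv3
    · exact L_mul_eq_zero _ gv4
    · exact L_mul_eq_zero _ gv5
    · exact L_mul_eq_zero _ gv6
    · exact L_mul_eq_zero _ gv7
    · exact L_mul_eq_zero _ gv8
    · exact L_mul_eq_zero _ gv9
    · exact L_mul_eq_zero _ gv10
    · exact L_mul_eq_zero _ gv11
    · exact L_mul_eq_zero _ gv12
    · exact L_mul_eq_zero _ gv13
    · exact L_mul_eq_zero _ gv14
  · intro r; simp
  · intro x y _ _ hx hy r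
    rw [mul_add, map_add, hx, hy, add_zero]
  · intro t x _ hx r
    rw [smul_eq_mul, ← mul_assoc, hx]

noncomputable def Qp (c : Fin 12 → ℂ) : MvPolynomial (Fin 5) ℂ :=
  C (c 0) + C (c 1) * X 0 + C (c 2) * X 1 + C (c 3) * X 2 + C (c 4) * X 3 + C (c 5) * X 4
  + C (c 6) * X 0 ^ 2 + C (c 7) * (X 0 * X 1) + C (c 8) * (X 0 * X 2) + C (c 9) * (X 0 * X 3)
  + C (c 10) * X 4 ^ 2 + C (c 11) * X 0 ^ 3

set_option maxHeartbeats 1000000 in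
lemma Lev0 (c : Fin 12 → ℂ) : L (monomial (s 0 3) 1 * Qp c) = c 0 := by
  simp only [Qp, L_eq, hX, hXpow, C3, C16, monomial_pow, s_smul, one_pow, mul_assoc,
      mul_add, add_mul, monomial_mul, C_mul_monomial, monomial_mul_C, mul_one, one_mul,
      coeff_add, coeff_monomial, coeff_C]
  simp [fs_eq_iff, s_apply, Finsupp.add_apply]
  try norm_num

set_option maxHeartbeats 1000000 in
lemma Lev1 (c : Fin 12 → ℂ) : L (monomial (s 0 2) 1 * Qp c) = c 1 := by
  simp only [Qp, L_eq, hX, hXpow, C3, C16, monomial_pow, s_smul, one_pow, mul_assoc,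
      mul_add, add_mul, monomial_mul, C_mul_monomial, monomial_mul_C, mul_one, one_mul,
      coeff_add, coeff_monomial, coeff_C]
  simp [fs_eq_iff, s_apply, Finsupp.add_apply]
  try norm_num

set_option maxHeartbeats 1000000 in
lemma Lev2 (c : Fin 12 → ℂ) : L (monomial (s 0 1 + s 3 1) (1/3) * Qp c) = c 2 := by
  simp only [Qp, L_eq, hX, hXpow, C3, C16, monomial_pow, s_smul, one_pow, mul_assoc,
      mul_add, add_mul, monomial_mul, C_mul_monomial, monomial_mul_C, mul_one, one_mul,
      coeff_add, coeff_monomial, coeff_C]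
  simp [fs_eq_iff, s_apply, Finsupp.add_apply]
  try norm_num

set_option maxHeartbeats 1000000 in
lemma Lev3 (c : Fin 12 → ℂ) : L (monomial (s 0 1 + s 2 1) (1/3) * Qp c) = c 3 := by
  simp only [Qp, L_eq, hX, hXpow, C3, C16, monomial_pow, s_smul, one_pow, mul_assoc,
      mul_add, add_mul, monomial_mul, C_mul_monomial, monomial_mul_C, mul_one, one_mul,
      coeff_add, coeff_monomial, coeff_C]
  simp [fs_eq_iff, s_apply, Finsupp.add_apply]
  try norm_num

set_option maxHeartbeats 1000000 in
lemma Lev4 (c : Fin 12 → ℂ) : L (monomial (s 0 1 + s 1 1) (1/3) * Qp c) = c 4 := by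
  simp only [Qp, L_eq, hX, hXpow, C3, C16, monomial_pow, s_smul, one_pow, mul_assoc,
      mul_add, add_mul, monomial_mul, C_mul_monomial, monomial_mul_C, mul_one, one_mul,
      coeff_add, coeff_monomial, coeff_C]
  simp [fs_eq_iff, s_apply, Finsupp.add_apply]
  try norm_num

set_option maxHeartbeats 1000000 in
lemma Lev5 (c : Fin 12 → ℂ) : L (monomial (s 4 2) (1/16) * Qp c) = c 5 := by
  simp only [Qp, L_eq, hX, hXpow, C3, C16, monomial_pow, s_smul, one_pow, mul_assoc,
      mul_add, add_mul, monomial_mul, C_mul_monomial, monomial_mul_C, mul_one, one_mul,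
      coeff_add, coeff_monomial, coeff_C]
  simp [fs_eq_iff, s_apply, Finsupp.add_apply]
  try norm_num

set_option maxHeartbeats 1000000 in
lemma Lev6 (c : Fin 12 → ℂ) : L (monomial (s 0 1) 1 * Qp c) = c 6 := by
  simp only [Qp, L_eq, hX, hXpow, C3, C16, monomial_pow, s_smul, one_pow, mul_assoc,
      mul_add, add_mul, monomial_mul, C_mul_monomial, monomial_mul_C, mul_one, one_mul,
      coeff_add, coeff_monomial, coeff_C]
  simp [fs_eq_iff, s_apply, Finsupp.add_apply]
  try norm_num

set_option maxHeartbeats 1000000 in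
lemma Lev7 (c : Fin 12 → ℂ) : L (monomial (s 3 1) (1/3) * Qp c) = c 7 := by
  simp only [Qp, L_eq, hX, hXpow, C3, C16, monomial_pow, s_smul, one_pow, mul_assoc,
      mul_add, add_mul, monomial_mul, C_mul_monomial, monomial_mul_C, mul_one, one_mul,
      coeff_add, coeff_monomial, coeff_C]
  simp [fs_eq_iff, s_apply, Finsupp.add_apply]
  try norm_num

set_option maxHeartbeats 1000000 in
lemma Lev8 (c : Fin 12 → ℂ) : L (monomial (s 2 1) (1/3) * Qp c) = c 8 := by
  simp only [Qp, L_eq, hX, hXpow, C3, C16, monomial_pow, s_smul, one_pow, mul_assoc,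
      mul_add, add_mul, monomial_mul, C_mul_monomial, monomial_mul_C, mul_one, one_mul,
      coeff_add, coeff_monomial, coeff_C]
  simp [fs_eq_iff, s_apply, Finsupp.add_apply]
  try norm_num

set_option maxHeartbeats 1000000 in
lemma Lev9 (c : Fin 12 → ℂ) : L (monomial (s 1 1) (1/3) * Qp c) = c 9 := by
  simp only [Qp, L_eq, hX, hXpow, C3, C16, monomial_pow, s_smul, one_pow, mul_assoc,
      mul_add, add_mul, monomial_mul, C_mul_monomial, monomial_mul_C, mul_one, one_mul,
      coeff_add, coeff_monomial, coeff_C]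
  simp [fs_eq_iff, s_apply, Finsupp.add_apply]
  try norm_num

set_option maxHeartbeats 1000000 in
lemma Lev10 (c : Fin 12 → ℂ) : L (monomial (s 4 1) (1/16) * Qp c) = c 10 := by
  simp only [Qp, L_eq, hX, hXpow, C3, C16, monomial_pow, s_smul, one_pow, mul_assoc,
      mul_add, add_mul, monomial_mul, C_mul_monomial, monomial_mul_C, mul_one, one_mul,
      coeff_add, coeff_monomial, coeff_C]
  simp [fs_eq_iff, s_apply, Finsupp.add_apply]
  try norm_num

set_option maxHeartbeats 1000000 in
lemma Lev11 (c : Fin 12 → ℂ) : L (monomial (0 : F5) 1 * Qp c) = c 11 := by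
  simp only [Qp, L_eq, hX, hXpow, C3, C16, monomial_pow, s_smul, one_pow, mul_assoc,
      mul_add, add_mul, monomial_mul, C_mul_monomial, monomial_mul_C, mul_one, one_mul,
      coeff_add, coeff_monomial, coeff_C]
  simp [fs_eq_iff, s_apply, Finsupp.add_apply]
  try norm_num

lemma z1 : mkA (X 0 * X 4) = 0 := by
  refine Ideal.Quotient.eq_zero_iff_mem.mpr ?_
  refine Ideal.subset_span ?_
  simp

lemma hr1 : mkA (X 0) * mkA (X 4) = 0 := by
  have h := z1
  simp only [map_sub, map_mul, map_pow, map_ofNat] at h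
  convert h using 2 <;> try norm_num

lemma z2 : mkA (X 1 ^ 2 - 3 * (X 0 * X 2)) = 0 := by
  refine Ideal.Quotient.eq_zero_iff_mem.mpr ?_
  refine Ideal.subset_span ?_
  simp

lemma hr2 : mkA (X 1) ^ 2 - 3 * (mkA (X 0) * mkA (X 2)) = 0 := by
  have h := z2
  simp only [map_sub, map_mul, map_pow, map_ofNat] at h
  convert h using 2 <;> try norm_num

lemma z3 : mkA (X 1 * X 2 - 3 * (X 0 * X 3)) = 0 := by
  refine Ideal.Quotient.eq_zero_iff_mem.mpr ?_
  refine Ideal.subset_span ?_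
  simp

lemma hr3 : mkA (X 1) * mkA (X 2) - 3 * (mkA (X 0) * mkA (X 3)) = 0 := by
  have h := z3
  simp only [map_sub, map_mul, map_pow, map_ofNat] at h
  convert h using 2 <;> try norm_num

lemma z4 : mkA (X 1 * X 3 - 3 * X 0 ^ 2) = 0 := by
  refine Ideal.Quotient.eq_zero_iff_mem.mpr ?_
  refine Ideal.subset_span ?_
  simp

lemma hr4 : mkA (X 1) * mkA (X 3) - 3 * mkA (X 0) ^ 2 = 0 := by
  have h := z4
  simp only [map_sub, map_mul, map_pow, map_ofNat] at h
  convert h using 2 <;> try norm_num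

lemma z5 : mkA (X 2 ^ 2 - 3 * X 0 ^ 2) = 0 := by
  refine Ideal.Quotient.eq_zero_iff_mem.mpr ?_
  refine Ideal.subset_span ?_
  simp

lemma hr5 : mkA (X 2) ^ 2 - 3 * mkA (X 0) ^ 2 = 0 := by
  have h := z5
  simp only [map_sub, map_mul, map_pow, map_ofNat] at h
  convert h using 2 <;> try norm_num

lemma z6 : mkA (X 2 * X 3 - X 0 * X 1) = 0 := by
  refine Ideal.Quotient.eq_zero_iff_mem.mpr ?_
  refine Ideal.subset_span ?_
  simp

lemma hr6 : mkA (X 2) * mkA (X 3) - mkA (X 0) * mkA (X 1) = 0 := by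
  have h := z6
  simp only [map_sub, map_mul, map_pow, map_ofNat] at h
  convert h using 2 <;> try norm_num

lemma z7 : mkA (X 3 ^ 2 - X 0 * X 2) = 0 := by
  refine Ideal.Quotient.eq_zero_iff_mem.mpr ?_
  refine Ideal.subset_span ?_
  simp

lemma hr7 : mkA (X 3) ^ 2 - mkA (X 0) * mkA (X 2) = 0 := by
  have h := z7
  simp only [map_sub, map_mul, map_pow, map_ofNat] at h
  convert h using 2 <;> try norm_num

lemma z8 : mkA (16 * X 0 ^ 3 - X 4 ^ 3) = 0 := by
  refine Ideal.Quotient.eq_zero_iff_mem.mpr ?_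
  refine Ideal.subset_span ?_
  simp

lemma hr8 : 16 * mkA (X 0) ^ 3 - mkA (X 4) ^ 3 = 0 := by
  have h := z8
  simp only [map_sub, map_mul, map_pow, map_ofNat] at h
  convert h using 2 <;> try norm_num

lemma z9 : mkA (X 0 ^ 2 * X 1) = 0 := by
  refine Ideal.Quotient.eq_zero_iff_mem.mpr ?_
  refine Ideal.subset_span ?_
  simp

lemma hr9 : mkA (X 0) ^ 2 * mkA (X 1) = 0 := by
  have h := z9
  simp only [map_sub, map_mul, map_pow, map_ofNat] at h
  convert h using 2 <;> try norm_num

lemma z10 : mkA (X 0 ^ 2 * X 2) = 0 := by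
  refine Ideal.Quotient.eq_zero_iff_mem.mpr ?_
  refine Ideal.subset_span ?_
  simp

lemma hr10 : mkA (X 0) ^ 2 * mkA (X 2) = 0 := by
  have h := z10
  simp only [map_sub, map_mul, map_pow, map_ofNat] at h
  convert h using 2 <;> try norm_num

lemma z11 : mkA (X 0 ^ 2 * X 3) = 0 := by
  refine Ideal.Quotient.eq_zero_iff_mem.mpr ?_
  refine Ideal.subset_span ?_
  simp

lemma hr11 : mkA (X 0) ^ 2 * mkA (X 3) = 0 := by
  have h := z11
  simp only [map_sub, map_mul, map_pow, map_ofNat] at h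
  convert h using 2 <;> try norm_num

lemma z12 : mkA (X 1 * X 4) = 0 := by
  refine Ideal.Quotient.eq_zero_iff_mem.mpr ?_
  refine Ideal.subset_span ?_
  simp

lemma hr12 : mkA (X 1) * mkA (X 4) = 0 := by
  have h := z12
  simp only [map_sub, map_mul, map_pow, map_ofNat] at h
  convert h using 2 <;> try norm_num

lemma z13 : mkA (X 2 * X 4) = 0 := by
  refine Ideal.Quotient.eq_zero_iff_mem.mpr ?_
  refine Ideal.subset_span ?_
  simp

lemma hr13 : mkA (X 2) * mkA (X 4) = 0 := by
  have h := z13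
  simp only [map_sub, map_mul, map_pow, map_ofNat] at h
  convert h using 2 <;> try norm_num

lemma z14 : mkA (X 3 * X 4) = 0 := by
  refine Ideal.Quotient.eq_zero_iff_mem.mpr ?_
  refine Ideal.subset_span ?_
  simp

lemma hr14 : mkA (X 3) * mkA (X 4) = 0 := by
  have h := z14
  simp only [map_sub, map_mul, map_pow, map_ofNat] at h
  convert h using 2 <;> try norm_num

lemma smul3 (y : MvPolynomial (Fin 5) ℂ ⧸ idealA) : (3:ℂ) • y = 3 * y := by
  rw [← algebraMap_smul (MvPolynomial (Fin 5) ℂ ⧸ idealA) (3:ℂ) y, smul_eq_mul, map_ofNat]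
lemma smul16 (y : MvPolynomial (Fin 5) ℂ ⧸ idealA) : (16:ℂ) • y = 16 * y := by
  rw [← algebraMap_smul (MvPolynomial (Fin 5) ℂ ⧸ idealA) (16:ℂ) y, smul_eq_mul, map_ofNat]

lemma lemA : LinearIndependent ℂ
    ((![1, mkA (X 0), mkA (X 1), mkA (X 2), mkA (X 3), mkA (X 4),
      mkA (X 0) ^ 2, mkA (X 0) * mkA (X 1), mkA (X 0) * mkA (X 2),
      mkA (X 0) * mkA (X 3), mkA (X 4) ^ 2, mkA (X 0) ^ 3] : Fin 12 → MvPolynomial (Fin 5) ℂ ⧸ idealA)) := by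
  rw [Fintype.linearIndependent_iff]
  intro c hc
  have hs : ∀ (a : ℂ) (y : MvPolynomial (Fin 5) ℂ ⧸ idealA), a • y = mkA (C a) * y :=
    fun a y => by
      rw [← algebraMap_smul (MvPolynomial (Fin 5) ℂ ⧸ idealA) a y, smul_eq_mul]; rfl
  have e1 : (Fin.succ ((0 : Fin 11))) = (1 : Fin 12) := rfl
  have e2 : (Fin.succ (Fin.succ ((0 : Fin 10)))) = (2 : Fin 12) := rfl
  have e3 : (Fin.succ (Fin.succ (Fin.succ ((0 : Fin 9))))) = (3 : Fin 12) := rfl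
  have e4 : (Fin.succ (Fin.succ (Fin.succ (Fin.succ ((0 : Fin 8)))))) = (4 : Fin 12) := rfl
  have e5 : (Fin.succ (Fin.succ (Fin.succ (Fin.succ (Fin.succ ((0 : Fin 7))))))) = (5 : Fin 12) := rfl
  have e6 : (Fin.succ (Fin.succ (Fin.succ (Fin.succ (Fin.succ (Fin.succ ((0 : Fin 6)))))))) = (6 : Fin 12) := rfl
  have e7 : (Fin.succ (Fin.succ (Fin.succ (Fin.succ (Fin.succ (Fin.succ (Fin.succ ((0 : Fin 5))))))))) = (7 : Fin 12) := rfl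
  have e8 : (Fin.succ (Fin.succ (Fin.succ (Fin.succ (Fin.succ (Fin.succ (Fin.succ (Fin.succ ((0 : Fin 4)))))))))) = (8 : Fin 12) := rfl
  have e9 : (Fin.succ (Fin.succ (Fin.succ (Fin.succ (Fin.succ (Fin.succ (Fin.succ (Fin.succ (Fin.succ ((0 : Fin 3))))))))))) = (9 : Fin 12) := rfl
  have e10 : (Fin.succ (Fin.succ (Fin.succ (Fin.succ (Fin.succ (Fin.succ (Fin.succ (Fin.succ (Fin.succ (Fin.succ ((0 : Fin 2)))))))))))) = (10 : Fin 12) := rfl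
  have e11 : (Fin.succ (Fin.succ (Fin.succ (Fin.succ (Fin.succ (Fin.succ (Fin.succ (Fin.succ (Fin.succ (Fin.succ (Fin.succ ((0 : Fin 1))))))))))))) = (11 : Fin 12) := rfl
  simp only [Fin.sum_univ_succ, Fin.sum_univ_zero, Matrix.cons_val_zero, Matrix.cons_val_succ,
    e1, e2, e3, e4, e5, e6, e7, e8, e9, e10, e11, add_zero, hs] at hc
  have h0 : mkA (Qp c) = 0 := by
    simp only [Qp, map_add, map_mul, map_pow]
    linear_combination hc
  have hv := L_vanish (Ideal.Quotient.eq_zero_iff_mem.mp h0)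
  intro i
  fin_cases i
  · exact (Lev0 c).symm.trans (hv _)
  · exact (Lev1 c).symm.trans (hv _)
  · exact (Lev2 c).symm.trans (hv _)
  · exact (Lev3 c).symm.trans (hv _)
  · exact (Lev4 c).symm.trans (hv _)
  · exact (Lev5 c).symm.trans (hv _)
  · exact (Lev6 c).symm.trans (hv _)
  · exact (Lev7 c).symm.trans (hv _)
  · exact (Lev8 c).symm.trans (hv _)
  · exact (Lev9 c).symm.trans (hv _)
  · exact (Lev10 c).symm.trans (hv _)
  · exact (Lev11 c).symm.trans (hv _)

set_option maxHeartbeats 4000000 in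
lemma lemB : Submodule.span ℂ (Set.range
    ((![1, mkA (X 0), mkA (X 1), mkA (X 2), mkA (X 3), mkA (X 4),
      mkA (X 0) ^ 2, mkA (X 0) * mkA (X 1), mkA (X 0) * mkA (X 2),
      mkA (X 0) * mkA (X 3), mkA (X 4) ^ 2, mkA (X 0) ^ 3] : Fin 12 → MvPolynomial (Fin 5) ℂ ⧸ idealA))) = ⊤ := by
  set S := Submodule.span ℂ (Set.range
    ((![1, mkA (X 0), mkA (X 1), mkA (X 2), mkA (X 3), mkA (X 4),
      mkA (X 0) ^ 2, mkA (X 0) * mkA (X 1), mkA (X 0) * mkA (X 2),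
      mkA (X 0) * mkA (X 3), mkA (X 4) ^ 2, mkA (X 0) ^ 3] : Fin 12 → MvPolynomial (Fin 5) ℂ ⧸ idealA))) with hS
  have hv : ∀ k : Fin 12, (![1, mkA (X 0), mkA (X 1), mkA (X 2), mkA (X 3), mkA (X 4),
      mkA (X 0) ^ 2, mkA (X 0) * mkA (X 1), mkA (X 0) * mkA (X 2),
      mkA (X 0) * mkA (X 3), mkA (X 4) ^ 2, mkA (X 0) ^ 3] : Fin 12 → MvPolynomial (Fin 5) ℂ ⧸ idealA) k ∈ S :=
    fun k => Submodule.subset_span ⟨k, rfl⟩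
  have hstep : ∀ (k : Fin 12) (i : Fin 5),
      (![1, mkA (X 0), mkA (X 1), mkA (X 2), mkA (X 3), mkA (X 4),
      mkA (X 0) ^ 2, mkA (X 0) * mkA (X 1), mkA (X 0) * mkA (X 2),
      mkA (X 0) * mkA (X 3), mkA (X 4) ^ 2, mkA (X 0) ^ 3] : Fin 12 → MvPolynomial (Fin 5) ℂ ⧸ idealA) k * mkA (X i) ∈ S := by
    intro k i
    fin_cases k <;> fin_cases i
    · show (1 : MvPolynomial (Fin 5) ℂ ⧸ idealA) * mkA (X 0) ∈ S
      rw [one_mul]; exact hv 1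
    · show (1 : MvPolynomial (Fin 5) ℂ ⧸ idealA) * mkA (X 1) ∈ S
      rw [one_mul]; exact hv 2
    · show (1 : MvPolynomial (Fin 5) ℂ ⧸ idealA) * mkA (X 2) ∈ S
      rw [one_mul]; exact hv 3
    · show (1 : MvPolynomial (Fin 5) ℂ ⧸ idealA) * mkA (X 3) ∈ S
      rw [one_mul]; exact hv 4
    · show (1 : MvPolynomial (Fin 5) ℂ ⧸ idealA) * mkA (X 4) ∈ S
      rw [one_mul]; exact hv 5
    · show mkA (X 0) * mkA (X 0) ∈ S
      rw [← pow_two]; exact hv 6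
    · show mkA (X 0) * mkA (X 1) ∈ S
      exact hv 7
    · show mkA (X 0) * mkA (X 2) ∈ S
      exact hv 8
    · show mkA (X 0) * mkA (X 3) ∈ S
      exact hv 9
    · show mkA (X 0) * mkA (X 4) ∈ S
      rw [hr1]; exact S.zero_mem
    · show mkA (X 1) * mkA (X 0) ∈ S
      rw [mul_comm]; exact hv 7
    · show mkA (X 1) * mkA (X 1) ∈ S
      have e : mkA (X 1) * mkA (X 1) = 3 * (mkA (X 0) * mkA (X 2)) := by linear_combination hr2
      rw [e, ← smul3]
      exact S.smul_mem _ (hv 8)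
    · show mkA (X 1) * mkA (X 2) ∈ S
      have e : mkA (X 1) * mkA (X 2) = 3 * (mkA (X 0) * mkA (X 3)) := by linear_combination hr3
      rw [e, ← smul3]
      exact S.smul_mem _ (hv 9)
    · show mkA (X 1) * mkA (X 3) ∈ S
      have e : mkA (X 1) * mkA (X 3) = 3 * (mkA (X 0) ^ 2) := by linear_combination hr4
      rw [e, ← smul3]
      exact S.smul_mem _ (hv 6)
    · show mkA (X 1) * mkA (X 4) ∈ S
      rw [hr12]; exact S.zero_mem
    · show mkA (X 2) * mkA (X 0) ∈ S
      rw [mul_comm]; exact hv 8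
    · show mkA (X 2) * mkA (X 1) ∈ S
      have e : mkA (X 2) * mkA (X 1) = 3 * (mkA (X 0) * mkA (X 3)) := by linear_combination hr3
      rw [e, ← smul3]
      exact S.smul_mem _ (hv 9)
    · show mkA (X 2) * mkA (X 2) ∈ S
      have e : mkA (X 2) * mkA (X 2) = 3 * (mkA (X 0) ^ 2) := by linear_combination hr5
      rw [e, ← smul3]
      exact S.smul_mem _ (hv 6)
    · show mkA (X 2) * mkA (X 3) ∈ S
      have e : mkA (X 2) * mkA (X 3) = mkA (X 0) * mkA (X 1) := by linear_combination hr6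
      rw [e]; exact hv 7
    · show mkA (X 2) * mkA (X 4) ∈ S
      rw [hr13]; exact S.zero_mem
    · show mkA (X 3) * mkA (X 0) ∈ S
      rw [mul_comm]; exact hv 9
    · show mkA (X 3) * mkA (X 1) ∈ S
      have e : mkA (X 3) * mkA (X 1) = 3 * (mkA (X 0) ^ 2) := by linear_combination hr4
      rw [e, ← smul3]
      exact S.smul_mem _ (hv 6)
    · show mkA (X 3) * mkA (X 2) ∈ S
      have e : mkA (X 3) * mkA (X 2) = mkA (X 0) * mkA (X 1) := by linear_combination hr6
      rw [e]; exact hv 7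
    · show mkA (X 3) * mkA (X 3) ∈ S
      have e : mkA (X 3) * mkA (X 3) = mkA (X 0) * mkA (X 2) := by linear_combination hr7
      rw [e]; exact hv 8
    · show mkA (X 3) * mkA (X 4) ∈ S
      rw [hr14]; exact S.zero_mem
    · show mkA (X 4) * mkA (X 0) ∈ S
      have e : mkA (X 4) * mkA (X 0) = 0 := by linear_combination hr1
      rw [e]; exact S.zero_mem
    · show mkA (X 4) * mkA (X 1) ∈ S
      have e : mkA (X 4) * mkA (X 1) = 0 := by linear_combination hr12
      rw [e]; exact S.zero_mem
    · show mkA (X 4) * mkA (X 2) ∈ S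
      have e : mkA (X 4) * mkA (X 2) = 0 := by linear_combination hr13
      rw [e]; exact S.zero_mem
    · show mkA (X 4) * mkA (X 3) ∈ S
      have e : mkA (X 4) * mkA (X 3) = 0 := by linear_combination hr14
      rw [e]; exact S.zero_mem
    · show mkA (X 4) * mkA (X 4) ∈ S
      rw [← pow_two]; exact hv 10
    · show mkA (X 0) ^ 2 * mkA (X 0) ∈ S
      rw [← pow_succ]; exact hv 11
    · show mkA (X 0) ^ 2 * mkA (X 1) ∈ S
      rw [hr9]; exact S.zero_mem
    · show mkA (X 0) ^ 2 * mkA (X 2) ∈ S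
      rw [hr10]; exact S.zero_mem
    · show mkA (X 0) ^ 2 * mkA (X 3) ∈ S
      rw [hr11]; exact S.zero_mem
    · show mkA (X 0) ^ 2 * mkA (X 4) ∈ S
      have e : mkA (X 0) ^ 2 * mkA (X 4) = 0 := by linear_combination mkA (X 0) * hr1
      rw [e]; exact S.zero_mem
    · show mkA (X 0) * mkA (X 1) * mkA (X 0) ∈ S
      have e : mkA (X 0) * mkA (X 1) * mkA (X 0) = 0 := by linear_combination hr9
      rw [e]; exact S.zero_mem
    · show mkA (X 0) * mkA (X 1) * mkA (X 1) ∈ S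
      have e : mkA (X 0) * mkA (X 1) * mkA (X 1) = 0 := by linear_combination mkA (X 0) * hr2 + 3 * hr10
      rw [e]; exact S.zero_mem
    · show mkA (X 0) * mkA (X 1) * mkA (X 2) ∈ S
      have e : mkA (X 0) * mkA (X 1) * mkA (X 2) = 0 := by linear_combination mkA (X 0) * hr3 + 3 * hr11
      rw [e]; exact S.zero_mem
    · show mkA (X 0) * mkA (X 1) * mkA (X 3) ∈ S
      have e : mkA (X 0) * mkA (X 1) * mkA (X 3) = 3 * (mkA (X 0) ^ 3) := by linear_combination mkA (X 0) * hr4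
      rw [e, ← smul3]
      exact S.smul_mem _ (hv 11)
    · show mkA (X 0) * mkA (X 1) * mkA (X 4) ∈ S
      have e : mkA (X 0) * mkA (X 1) * mkA (X 4) = 0 := by linear_combination mkA (X 0) * hr12
      rw [e]; exact S.zero_mem
    · show mkA (X 0) * mkA (X 2) * mkA (X 0) ∈ S
      have e : mkA (X 0) * mkA (X 2) * mkA (X 0) = 0 := by linear_combination hr10
      rw [e]; exact S.zero_mem
    · show mkA (X 0) * mkA (X 2) * mkA (X 1) ∈ S
      have e : mkA (X 0) * mkA (X 2) * mkA (X 1) = 0 := by linear_combination mkA (X 0) * hr3 + 3 * hr11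
      rw [e]; exact S.zero_mem
    · show mkA (X 0) * mkA (X 2) * mkA (X 2) ∈ S
      have e : mkA (X 0) * mkA (X 2) * mkA (X 2) = 3 * (mkA (X 0) ^ 3) := by linear_combination mkA (X 0) * hr5
      rw [e, ← smul3]
      exact S.smul_mem _ (hv 11)
    · show mkA (X 0) * mkA (X 2) * mkA (X 3) ∈ S
      have e : mkA (X 0) * mkA (X 2) * mkA (X 3) = 0 := by linear_combination mkA (X 0) * hr6 + hr9
      rw [e]; exact S.zero_mem
    · show mkA (X 0) * mkA (X 2) * mkA (X 4) ∈ S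
      have e : mkA (X 0) * mkA (X 2) * mkA (X 4) = 0 := by linear_combination mkA (X 0) * hr13
      rw [e]; exact S.zero_mem
    · show mkA (X 0) * mkA (X 3) * mkA (X 0) ∈ S
      have e : mkA (X 0) * mkA (X 3) * mkA (X 0) = 0 := by linear_combination hr11
      rw [e]; exact S.zero_mem
    · show mkA (X 0) * mkA (X 3) * mkA (X 1) ∈ S
      have e : mkA (X 0) * mkA (X 3) * mkA (X 1) = 3 * (mkA (X 0) ^ 3) := by linear_combination mkA (X 0) * hr4
      rw [e, ← smul3]
      exact S.smul_mem _ (hv 11)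
    · show mkA (X 0) * mkA (X 3) * mkA (X 2) ∈ S
      have e : mkA (X 0) * mkA (X 3) * mkA (X 2) = 0 := by linear_combination mkA (X 0) * hr6 + hr9
      rw [e]; exact S.zero_mem
    · show mkA (X 0) * mkA (X 3) * mkA (X 3) ∈ S
      have e : mkA (X 0) * mkA (X 3) * mkA (X 3) = 0 := by linear_combination mkA (X 0) * hr7 + hr10
      rw [e]; exact S.zero_mem
    · show mkA (X 0) * mkA (X 3) * mkA (X 4) ∈ S
      have e : mkA (X 0) * mkA (X 3) * mkA (X 4) = 0 := by linear_combination mkA (X 0) * hr14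
      rw [e]; exact S.zero_mem
    · show mkA (X 4) ^ 2 * mkA (X 0) ∈ S
      have e : mkA (X 4) ^ 2 * mkA (X 0) = 0 := by linear_combination mkA (X 4) * hr1
      rw [e]; exact S.zero_mem
    · show mkA (X 4) ^ 2 * mkA (X 1) ∈ S
      have e : mkA (X 4) ^ 2 * mkA (X 1) = 0 := by linear_combination mkA (X 4) * hr12
      rw [e]; exact S.zero_mem
    · show mkA (X 4) ^ 2 * mkA (X 2) ∈ S
      have e : mkA (X 4) ^ 2 * mkA (X 2) = 0 := by linear_combination mkA (X 4) * hr13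
      rw [e]; exact S.zero_mem
    · show mkA (X 4) ^ 2 * mkA (X 3) ∈ S
      have e : mkA (X 4) ^ 2 * mkA (X 3) = 0 := by linear_combination mkA (X 4) * hr14
      rw [e]; exact S.zero_mem
    · show mkA (X 4) ^ 2 * mkA (X 4) ∈ S
      have e : mkA (X 4) ^ 2 * mkA (X 4) = 16 * (mkA (X 0) ^ 3) := by linear_combination -hr8
      rw [e, ← smul16]
      exact S.smul_mem _ (hv 11)
    · show mkA (X 0) ^ 3 * mkA (X 0) ∈ S
      have h : (16:ℂ) • (mkA (X 0) ^ 3 * mkA (X 0)) = 0 := by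
        rw [smul16]; linear_combination mkA (X 0) * hr8 + mkA (X 4) ^ 2 * hr1
      have e : mkA (X 0) ^ 3 * mkA (X 0) = 0 := by
        have h2 := congrArg (fun z => ((1:ℂ)/16) • z) h
        simp only [smul_smul, smul_zero] at h2
        norm_num at h2
        exact h2
      rw [e]; exact S.zero_mem
    · show mkA (X 0) ^ 3 * mkA (X 1) ∈ S
      have e : mkA (X 0) ^ 3 * mkA (X 1) = 0 := by linear_combination mkA (X 0) * hr9
      rw [e]; exact S.zero_mem
    · show mkA (X 0) ^ 3 * mkA (X 2) ∈ S
      have e : mkA (X 0) ^ 3 * mkA (X 2) = 0 := by linear_combination mkA (X 0) * hr10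
      rw [e]; exact S.zero_mem
    · show mkA (X 0) ^ 3 * mkA (X 3) ∈ S
      have e : mkA (X 0) ^ 3 * mkA (X 3) = 0 := by linear_combination mkA (X 0) * hr11
      rw [e]; exact S.zero_mem
    · show mkA (X 0) ^ 3 * mkA (X 4) ∈ S
      have e : mkA (X 0) ^ 3 * mkA (X 4) = 0 := by linear_combination mkA (X 0) ^ 2 * hr1
      rw [e]; exact S.zero_mem

  have hmul : ∀ (i : Fin 5), ∀ x ∈ S, x * mkA (X i) ∈ S := by
    intro i x hx
    refine Submodule.span_induction ?_ ?_ ?_ ?_ hx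
    · rintro y ⟨k, rfl⟩; exact hstep k i
    · rw [zero_mul]; exact S.zero_mem
    · intro a b _ _ ha hb; rw [add_mul]; exact S.add_mem ha hb
    · intro a y _ hy; rw [smul_mul_assoc]; exact S.smul_mem a hy
  rw [eq_top_iff]
  rintro x -
  obtain ⟨p, rfl⟩ := Ideal.Quotient.mk_surjective x
  induction p using MvPolynomial.induction_on with
  | C a =>
    have e : (Ideal.Quotient.mk idealA) (C a) = a • (1 : MvPolynomial (Fin 5) ℂ ⧸ idealA) := by
      rw [← algebraMap_smul (MvPolynomial (Fin 5) ℂ ⧸ idealA) a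
        (1 : MvPolynomial (Fin 5) ℂ ⧸ idealA), smul_eq_mul, mul_one]; rfl
    rw [e]; exact S.smul_mem a (hv 0)
  | add p q hp hq => rw [map_add]; exact S.add_mem hp hq
  | mul_X p i hp => rw [map_mul]; exact hmul i _ hp

theorem chen_ruan_P1344_basis :
    LinearIndependent ℂ
      (![1, mkA (X 0), mkA (X 1), mkA (X 2), mkA (X 3), mkA (X 4),
        mkA (X 0) ^ 2, mkA (X 0) * mkA (X 1), mkA (X 0) * mkA (X 2),
        mkA (X 0) * mkA (X 3), mkA (X 4) ^ 2, mkA (X 0) ^ 3] : Fin 12 → _) ∧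
    Submodule.span ℂ (Set.range
      (![1, mkA (X 0), mkA (X 1), mkA (X 2), mkA (X 3), mkA (X 4),
        mkA (X 0) ^ 2, mkA (X 0) * mkA (X 1), mkA (X 0) * mkA (X 2),
        mkA (X 0) * mkA (X 3), mkA (X 4) ^ 2, mkA (X 0) ^ 3] : Fin 12 → _)) = ⊤ ∧
    Module.finrank ℂ (MvPolynomial (Fin 5) ℂ ⧸ idealA) = 12 := by
  refine ⟨lemA, lemB, ?_⟩
  have bb : Module.Basis (Fin 12) ℂ (MvPolynomial (Fin 5) ℂ ⧸ idealA) := Module.Basis.mk lemA lemB.ge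
  rw [Module.finrank_eq_card_basis bb]
  simp
end
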